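/- All five h-KCC-invariants (ε^{(i)}_{(1)1}, P^i_{j11}, R^i_{jk1}, B^i_{jkm}, D^{i1}_{jkm}) of the SODE d²x^i/dt² + F^{(i)}_{(1)1}(t,x,x₁) = 0 vanish identically (for all t, x, and all x₁ ∈ ℝⁿ) if and only if there exist functions Γ^i_{jk}(x), symmetric in j,k and with vanishing curvature 𝔯^i_{pqj} = ∂Γ^i_{pq}/∂x^j − ∂Γ^i_{pj}/∂x^q + Γ^r_{pq}Γ^i_{rj} − Γ^r_{pj}Γ^i_{rq} = 0, such that F^{(i)}_{(1)1} = Γ^i_{pq}(x)x₁^p x₁^q − H¹₁₁(t)x₁^i. -/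

import Mathlib

noncomputable section

/-- Partial derivative of `f` with respect to the `j`-th coordinate at `x`. -/
def pd {n : ℕ} (f : (Fin n → ℝ) → ℝ) (x : Fin n → ℝ) (j : Fin n) : ℝ :=
  deriv (fun s => f (Function.update x j s)) (x j)

/-- The first h-KCC-invariant
`ε^{(i)}_{(1)1} = −F^{(i)} + (1/2)(∂F^{(i)}/∂x₁^r) x₁^r − (1/2) H¹₁₁ x₁^i`. -/
def eps {n : ℕ} (F : ℝ → (Fin n → ℝ) → (Fin n → ℝ) → Fin n → ℝ) (H : ℝ → ℝ)
    (t : ℝ) (x v : Fin n → ℝ) (i : Fin n) : ℝ :=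
  -F t x v i + (1 / 2) * ∑ r, pd (fun w => F t x w i) v r * v r
    - (1 / 2) * H t * v i

/-- The second h-KCC-invariant (jet h-deviation curvature tensor) `P^i_{j11}`. -/
def Pdev {n : ℕ} (F : ℝ → (Fin n → ℝ) → (Fin n → ℝ) → Fin n → ℝ) (H : ℝ → ℝ)
    (t : ℝ) (x v : Fin n → ℝ) (i j : Fin n) : ℝ :=
  -pd (fun y => F t y v i) x j
    + (1 / 2) * deriv (fun s => pd (fun w => F s x w i) v j) t
    + (1 / 2) * ∑ r, pd (fun y => pd (fun w => F t y w i) v j) x r * v r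
    - (1 / 2) * ∑ r, pd (fun w => pd (fun w' => F t x w' i) w j) v r * F t x v r
    + (1 / 4) * ∑ r, pd (fun w => F t x w i) v r * pd (fun w => F t x w r) v j
    + (1 / 2) * deriv H t * (if i = j then (1 : ℝ) else 0)
    - (1 / 4) * (H t) ^ 2 * (if i = j then (1 : ℝ) else 0)

/-- The third h-KCC-invariant
`R^i_{jk1} = (1/3)[∂P^i_{j11}/∂x₁^k − ∂P^i_{k11}/∂x₁^j]`. -/
def Rcurv {n : ℕ} (F : ℝ → (Fin n → ℝ) → (Fin n → ℝ) → Fin n → ℝ) (H : ℝ → ℝ)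
    (t : ℝ) (x v : Fin n → ℝ) (i j k : Fin n) : ℝ :=
  (1 / 3) * (pd (fun w => Pdev F H t x w i j) v k
    - pd (fun w => Pdev F H t x w i k) v j)

/-- The fourth h-KCC-invariant `B^i_{jkm} = ∂R^i_{jk1}/∂x₁^m`. -/
def Bcurv {n : ℕ} (F : ℝ → (Fin n → ℝ) → (Fin n → ℝ) → Fin n → ℝ) (H : ℝ → ℝ)
    (t : ℝ) (x v : Fin n → ℝ) (i j k m : Fin n) : ℝ :=
  pd (fun w => Rcurv F H t x w i j k) v m

/-- The fifth h-KCC-invariant `D^{i1}_{jkm} = ∂³F^{(i)}/∂x₁^j∂x₁^k∂x₁^m`. -/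
def Dtens {n : ℕ} (F : ℝ → (Fin n → ℝ) → (Fin n → ℝ) → Fin n → ℝ)
    (t : ℝ) (x v : Fin n → ℝ) (i j k m : Fin n) : ℝ :=
  pd (fun w => pd (fun w' => pd (fun w'' => F t x w'' i) w' j) w k) v m

/-- The curvature tensor of a (time-independent) symmetric linear connection:
`𝔯^i_{pqj} = ∂Γ^i_{pq}/∂x^j − ∂Γ^i_{pj}/∂x^q + Γ^r_{pq}Γ^i_{rj} − Γ^r_{pj}Γ^i_{rq}`. -/
def curv {n : ℕ} (Γ : (Fin n → ℝ) → Fin n → Fin n → Fin n → ℝ)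
    (x : Fin n → ℝ) (i p q j : Fin n) : ℝ :=
  pd (fun y => Γ y i p q) x j - pd (fun y => Γ y i p j) x q
    + ∑ r, Γ x r p q * Γ x i r j - ∑ r, Γ x r p j * Γ x i r q

/-- Smoothness of a local object on the 1-jet space. -/
def SmoothJet {n : ℕ} (G : ℝ → (Fin n → ℝ) → (Fin n → ℝ) → Fin n → ℝ) : Prop :=
  ContDiff ℝ (⊤ : ℕ∞) (fun p : ℝ × (Fin n → ℝ) × (Fin n → ℝ) => G p.1 p.2.1 p.2.2)

namespace KCC


variable {n : ℕ}

/-- `f` has coordinate-`j` partial derivative `d` at `x`. -/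
def HasPd (f : (Fin n → ℝ) → ℝ) (x : Fin n → ℝ) (j : Fin n) (d : ℝ) : Prop :=
  HasDerivAt (fun s => f (Function.update x j s)) d (x j)

theorem HasPd.pd_eq {f : (Fin n → ℝ) → ℝ} {x j d} (h : HasPd f x j d) : pd f x j = d :=
  h.deriv

theorem hasPd_const (c : ℝ) (x : Fin n → ℝ) (j : Fin n) : HasPd (fun _ => c) x j 0 :=
  hasDerivAt_const _ _

theorem hasPd_coord (x : Fin n → ℝ) (p j : Fin n) :
    HasPd (fun w => w p) x j (if p = j then 1 else 0) := by
  unfold HasPd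
  simp only [Function.update_apply]
  rcases eq_or_ne p j with h | h
  · simpa [h] using hasDerivAt_id' (x j)
  · simpa [h] using hasDerivAt_const (x j) (x p)

theorem HasPd.add {f g : (Fin n → ℝ) → ℝ} {x j a b} (hf : HasPd f x j a) (hg : HasPd g x j b) :
    HasPd (fun w => f w + g w) x j (a + b) := HasDerivAt.add hf hg

theorem HasPd.sub {f g : (Fin n → ℝ) → ℝ} {x j a b} (hf : HasPd f x j a) (hg : HasPd g x j b) :
    HasPd (fun w => f w - g w) x j (a - b) := HasDerivAt.sub hf hg

theorem HasPd.neg {f : (Fin n → ℝ) → ℝ} {x j a} (hf : HasPd f x j a) :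
    HasPd (fun w => -f w) x j (-a) := HasDerivAt.neg hf

theorem HasPd.const_mul {f : (Fin n → ℝ) → ℝ} {x j a} (c : ℝ) (hf : HasPd f x j a) :
    HasPd (fun w => c * f w) x j (c * a) := HasDerivAt.const_mul c hf

theorem HasPd.mul {f g : (Fin n → ℝ) → ℝ} {x j a b} (hf : HasPd f x j a) (hg : HasPd g x j b) :
    HasPd (fun w => f w * g w) x j (a * g x + f x * b) := by
  have := HasDerivAt.fun_mul hf hg
  simpa [HasPd, Function.update_eq_self] using this

theorem hasPd_sum {ι : Type*} (s : Finset ι) {f : ι → (Fin n → ℝ) → ℝ} {x j}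
    {d : ι → ℝ} (h : ∀ r ∈ s, HasPd (f r) x j (d r)) :
    HasPd (fun w => ∑ r ∈ s, f r w) x j (∑ r ∈ s, d r) :=
  HasDerivAt.fun_sum h

theorem HasPd.congr_d {f : (Fin n → ℝ) → ℝ} {x j a b} (hf : HasPd f x j a) (h : a = b) :
    HasPd f x j b := h ▸ hf

/-- congruence: if `f = g` on a neighborhood of `x` (along the `j`-line it suffices),
then `HasPd` transfers. -/
theorem HasPd.congr_nhds {f g : (Fin n → ℝ) → ℝ} {x : Fin n → ℝ} {j d}
    (hf : HasPd f x j d) (h : ∀ᶠ s in nhds (x j), g (Function.update x j s) = f (Function.update x j s)) :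
    HasPd g x j d := by
  refine HasDerivAt.congr_of_eventuallyEq hf ?_
  exact h

theorem pd_congr_nhds {f g : (Fin n → ℝ) → ℝ} {x : Fin n → ℝ} {j}
    (h : ∀ᶠ s in nhds (x j), g (Function.update x j s) = f (Function.update x j s)) :
    pd g x j = pd f x j := by
  unfold pd
  exact Filter.EventuallyEq.deriv_eq h

theorem pd_zero_fun (x : Fin n → ℝ) (j : Fin n) : pd (fun _ => (0:ℝ)) x j = 0 :=
  (hasPd_const 0 x j).pd_eq


theorem hasPd_quad (a : Fin n → Fin n → ℝ) (v : Fin n → ℝ) (j : Fin n) :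
    HasPd (fun w => ∑ p, ∑ q, a p q * w p * w q) v j
      ((∑ q, a j q * v q) + ∑ p, a p j * v p) := by
  have key : ∀ p q : Fin n, HasPd (fun w => a p q * w p * w q) v j
      ((a p q * (if p = j then 1 else 0)) * v q + (a p q * v p) * (if q = j then 1 else 0)) :=
    fun p q => ((hasPd_coord v p j).const_mul (a p q)).mul (hasPd_coord v q j)
  refine (hasPd_sum Finset.univ fun p _ => hasPd_sum Finset.univ fun q _ => key p q).congr_d ?_
  simp only [mul_ite, ite_mul, mul_one, mul_zero, zero_mul, Finset.sum_add_distrib]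
  rw [Finset.sum_comm (f := fun p q => if q = j then a p q * v p else 0)]
  simp [Finset.sum_ite_eq']

theorem hasPd_linear (b : Fin n → ℝ) (v : Fin n → ℝ) (j : Fin n) :
    HasPd (fun w => ∑ q, b q * w q) v j (b j) := by
  have key : ∀ q : Fin n, HasPd (fun w => b q * w q) v j (b q * (if q = j then 1 else 0)) :=
    fun q => (hasPd_coord v q j).const_mul (b q)
  refine (hasPd_sum Finset.univ fun q _ => key q).congr_d ?_
  simp [Finset.sum_ite_eq']

theorem hasPd_coord_mul (e : ℝ) (v : Fin n → ℝ) (i j : Fin n) :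
    HasPd (fun w => e * w i) v j (e * (if i = j then 1 else 0)) :=
  (hasPd_coord v i j).const_mul e

/-- pd of the model function `w ↦ ∑ₚ∑_q C p q wₚ w_q − h·wᵢ`. -/
theorem hasPd_model (C : Fin n → Fin n → ℝ) (h : ℝ) (i : Fin n) (v : Fin n → ℝ) (j : Fin n) :
    HasPd (fun w => (∑ p, ∑ q, C p q * w p * w q) - h * w i) v j
      (((∑ q, C j q * v q) + ∑ p, C p j * v p) - h * (if i = j then 1 else 0)) :=
  (hasPd_quad C v j).sub (hasPd_coord_mul h v i j)


open ContDiff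

abbrev E (n : ℕ) := ℝ × (Fin n → ℝ) × (Fin n → ℝ)

theorem hasDerivAt_update (v : Fin n → ℝ) (j : Fin n) (s₀ : ℝ) :
    HasDerivAt (fun s => Function.update v j s) (Pi.single j 1) s₀ := by
  have h : (fun s => Function.update v j s) = fun s => v + (s - v j) • (Pi.single j 1 : Fin n → ℝ) := by
    funext s; ext p
    rcases eq_or_ne p j with h | h <;> simp [Function.update_apply, Pi.single_apply, h]
  rw [h]
  simpa using (((hasDerivAt_id s₀).sub_const (v j)).smul_const (Pi.single j 1 : Fin n → ℝ)).const_add v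

theorem hasPd_slice_v {G : E n → ℝ} {t : ℝ} {x v : Fin n → ℝ}
    (hG : DifferentiableAt ℝ G (t, x, v)) (j : Fin n) :
    HasPd (fun w => G (t, x, w)) v j (fderiv ℝ G (t, x, v) (0, 0, Pi.single j 1)) := by
  unfold HasPd
  have hc : HasDerivAt (fun s => ((t, x, Function.update v j s) : E n))
      ((0 : ℝ), (0 : Fin n → ℝ), Pi.single j (1:ℝ)) (v j) :=
    (hasDerivAt_const _ t).prodMk ((hasDerivAt_const _ x).prodMk (hasDerivAt_update v j (v j)))
  have := hG.hasFDerivAt.comp_hasDerivAt_of_eq (v j) hc (by simp)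
  simpa [Function.comp_def] using this

theorem contDiffOn_fderiv_apply {G : E n → ℝ} {Ω : Set (E n)}
    (hG : ContDiffOn ℝ ∞ G Ω) (hΩ : IsOpen Ω) (c : E n) :
    ContDiffOn ℝ ∞ (fun p => fderiv ℝ G p c) Ω :=
  (hG.fderiv_of_isOpen hΩ (le_of_eq (show (∞ : WithTop ℕ∞) + 1 = ∞ from rfl))).clm_apply
    contDiffOn_const

theorem differentiableAt_of_contDiffOn {G : E n → ℝ} {Ω : Set (E n)}
    (hG : ContDiffOn ℝ ∞ G Ω) (hΩ : IsOpen Ω) {p : E n} (hp : p ∈ Ω) :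
    DifferentiableAt ℝ G p :=
  ((hG.differentiableOn (by simp)).differentiableAt (hΩ.mem_nhds hp))

/-- The `v`-partial-derivative operator on the jet space preserves smoothness. -/
theorem contDiffOn_Pv {G : E n → ℝ} {Ω : Set (E n)}
    (hG : ContDiffOn ℝ ∞ G Ω) (hΩ : IsOpen Ω) (j : Fin n) :
    ContDiffOn ℝ ∞ (fun p : E n => pd (fun w => G (p.1, p.2.1, w)) p.2.2 j) Ω := by
  refine (contDiffOn_fderiv_apply hG hΩ (0, 0, Pi.single j 1)).congr ?_
  intro p hp
  exact (hasPd_slice_v (differentiableAt_of_contDiffOn hG hΩ hp) j).pd_eq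

theorem hasPd_of_differentiableAt {h : (Fin n → ℝ) → ℝ} {y : Fin n → ℝ}
    (hd : DifferentiableAt ℝ h y) (m : Fin n) :
    HasPd h y m (fderiv ℝ h y (Pi.single m 1)) := by
  unfold HasPd
  have := hd.hasFDerivAt.comp_hasDerivAt_of_eq (y m) (hasDerivAt_update y m (y m))
    (by simp)
  simpa [Function.comp_def] using this

theorem fderiv_eq_sum_pd {h : (Fin n → ℝ) → ℝ} {y : Fin n → ℝ}
    (hd : DifferentiableAt ℝ h y) (u : Fin n → ℝ) :
    fderiv ℝ h y u = ∑ m, u m * pd h y m := by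
  have hu : u = ∑ m, u m • (Pi.single m 1 : Fin n → ℝ) := by
    ext j
    simp [Pi.single_apply, Finset.sum_ite_eq]
  conv_lhs => rw [hu]
  rw [map_sum]
  refine Finset.sum_congr rfl fun m _ => ?_
  rw [(hasPd_of_differentiableAt hd m).pd_eq]
  simp [smul_eq_mul]

theorem hasDerivAt_ray {h : (Fin n → ℝ) → ℝ} {v : Fin n → ℝ} {s₀ : ℝ}
    (hd : DifferentiableAt ℝ h (s₀ • v)) :
    HasDerivAt (fun s => h (s • v)) (∑ m, v m * pd h (s₀ • v) m) s₀ := by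
  have hc : HasDerivAt (fun s : ℝ => s • v) v s₀ := by
    simpa using (hasDerivAt_id s₀).smul_const v
  have := hd.hasFDerivAt.comp_hasDerivAt s₀ hc
  rwa [fderiv_eq_sum_pd hd v] at this

theorem contDiff_pd_slice {h : (Fin n → ℝ) → ℝ} (hh : ContDiff ℝ ∞ h) (m : Fin n) :
    ContDiff ℝ ∞ (fun y => pd h y m) := by
  have h1 : ContDiff ℝ ∞ (fun y => fderiv ℝ h y (Pi.single m 1)) :=
    (hh.fderiv_right (le_of_eq (show (∞ : WithTop ℕ∞) + 1 = ∞ from rfl))).clm_apply contDiff_const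
  have he : (fun y => pd h y m) = fun y => fderiv ℝ h y (Pi.single m 1) := by
    funext y
    exact (hasPd_of_differentiableAt
      ((hh.differentiable (by simp)).differentiableAt) m).pd_eq
  rw [he]; exact h1

/-- one-dimensional second-order Taylor with vanishing third derivative. -/
theorem taylor_1d {g G1 G2 : ℝ → ℝ}
    (hg : ∀ s, HasDerivAt g (G1 s) s) (hG1 : ∀ s, HasDerivAt G1 (G2 s) s)
    (hG2 : ∀ s, HasDerivAt G2 0 s) :
    g 1 = g 0 + G1 0 + (1 / 2) * G2 0 := by
  have hG2c : ∀ s, G2 s = G2 0 := fun s =>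
    is_const_of_deriv_eq_zero (fun u => (hG2 u).differentiableAt) (fun u => (hG2 u).deriv) s 0
  have hφ : ∀ s, HasDerivAt (fun u => G1 u - (G1 0 + G2 0 * u)) 0 s := by
    intro s
    have := (hG1 s).fun_sub ((hasDerivAt_const s (G1 0)).fun_add ((hasDerivAt_id s).const_mul (G2 0)))
    simpa [hG2c s] using this
  have hG1e : ∀ s, G1 s = G1 0 + G2 0 * s := by
    intro s
    have := is_const_of_deriv_eq_zero (fun u => (hφ u).differentiableAt)
      (fun u => (hφ u).deriv) s 0
    simp only [mul_zero, add_zero, sub_self] at this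
    linarith
  have hψ : ∀ s, HasDerivAt (fun u => g u - (g 0 + G1 0 * u + (1/2) * G2 0 * u ^ 2)) 0 s := by
    intro s
    have hq : HasDerivAt (fun u : ℝ => g 0 + G1 0 * u + (1/2) * G2 0 * u ^ 2)
        (G1 0 + G2 0 * s) s := by
      have h2 : HasDerivAt (fun u : ℝ => u ^ 2) (2 * s) s := by
        simpa using hasDerivAt_pow 2 s
      have := ((hasDerivAt_const s (g 0)).fun_add ((hasDerivAt_id s).const_mul (G1 0))).fun_add
        (h2.const_mul ((1/2) * G2 0))
      refine this.congr_deriv ?_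
      ring
    have := (hg s).fun_sub hq
    simpa [hG1e s] using this
  have := is_const_of_deriv_eq_zero (fun u => (hψ u).differentiableAt)
    (fun u => (hψ u).deriv) 1 0
  simp only [mul_zero, mul_one, one_pow, add_zero, sub_self] at this
  nlinarith [this]

/-- A smooth function with vanishing third partials is quadratic. -/
theorem taylor2 {h : (Fin n → ℝ) → ℝ} (hh : ContDiff ℝ ∞ h)
    (h3 : ∀ (y : Fin n → ℝ) (j k m : Fin n),
      pd (fun w => pd (fun w' => pd h w' j) w k) y m = 0) (v : Fin n → ℝ) :
    h v = h 0 + (∑ r, pd h 0 r * v r)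
      + (1/2) * ∑ p, ∑ q, pd (fun w => pd h w p) 0 q * v p * v q := by
  have hdiff : ∀ (f : (Fin n → ℝ) → ℝ), ContDiff ℝ ∞ f → ∀ y, DifferentiableAt ℝ f y :=
    fun f hf y => (hf.differentiable (by simp)).differentiableAt
  set h1 : Fin n → (Fin n → ℝ) → ℝ := fun r y => pd h y r with hh1def
  set h2 : Fin n → Fin n → (Fin n → ℝ) → ℝ := fun r m y => pd (h1 r) y m with hh2def
  have hc1 : ∀ r, ContDiff ℝ ∞ (h1 r) := fun r => contDiff_pd_slice hh r
  have hc2 : ∀ r m, ContDiff ℝ ∞ (h2 r m) := fun r m => contDiff_pd_slice (hc1 r) m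
  have key := taylor_1d (g := fun s => h (s • v))
    (G1 := fun s => ∑ r, v r * h1 r (s • v))
    (G2 := fun s => ∑ r, v r * ∑ m, v m * h2 r m (s • v))
    (fun s => hasDerivAt_ray (hdiff h hh _))
    (fun s => HasDerivAt.fun_sum fun r _ =>
      (hasDerivAt_ray (hdiff (h1 r) (hc1 r) _)).const_mul (v r))
    (fun s => by
      have hm : ∀ r m : Fin n, HasDerivAt (fun s => v m * h2 r m (s • v))
          ((fun _ : Fin n => (0:ℝ)) m) s := by
        intro r m
        have h' := (hasDerivAt_ray (hdiff (h2 r m) (hc2 r m) (s • v))).const_mul (v m)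
        have hz : v m * (∑ k, v k * pd (h2 r m) (s • v) k) = 0 := by
          simp [hh2def, hh1def, h3]
        rwa [hz] at h'
      have hr : ∀ r : Fin n, HasDerivAt (fun s => v r * ∑ m, v m * h2 r m (s • v))
          ((fun _ : Fin n => (0:ℝ)) r) s := by
        intro r
        have hsum := HasDerivAt.fun_sum (fun m (_ : m ∈ Finset.univ) => hm r m)
        have h2' := hsum.const_mul (v r)
        simpa using h2'
      have := HasDerivAt.fun_sum (fun r (_ : r ∈ Finset.univ) => hr r)
      simpa using this)
  simp only [one_smul, zero_smul] at key
  rw [key]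
  have e2 : (1/2 : ℝ) * (∑ r, v r * ∑ m, v m * h2 r m 0)
      = (1/2) * ∑ p, ∑ q, pd (fun w => pd h w p) 0 q * v p * v q := by
    congr 1
    refine Finset.sum_congr rfl fun p _ => ?_
    rw [Finset.mul_sum]
    refine Finset.sum_congr rfl fun q _ => ?_
    simp only [hh2def, hh1def]
    ring
  rw [e2]
  congr 2
  exact Finset.sum_congr rfl fun r _ => mul_comm _ _


theorem eventually_update_mem {U : Set (Fin n → ℝ)} (hU : IsOpen U) {x : Fin n → ℝ}
    (hx : x ∈ U) (j : Fin n) : ∀ᶠ s in nhds (x j), Function.update x j s ∈ U := by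
  have hc : ContinuousAt (fun s => Function.update x j s) (x j) :=
    (hasDerivAt_update x j (x j)).continuousAt
  have hmem : Function.update x j (x j) ∈ U := by
    rw [Function.update_eq_self]; exact hx
  exact hc.eventually_mem (hU.mem_nhds hmem)

section Model
variable {U : Set (Fin n → ℝ)} {F : ℝ → (Fin n → ℝ) → (Fin n → ℝ) → Fin n → ℝ}
  {H : ℝ → ℝ} {Γ : ℝ → (Fin n → ℝ) → Fin n → Fin n → Fin n → ℝ}

theorem pdF_eq (hsym : ∀ t, ∀ y ∈ U, ∀ i p q, Γ t y i p q = Γ t y i q p)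
    (hrep : ∀ t, ∀ y ∈ U, ∀ (v : Fin n → ℝ) i,
      F t y v i = (∑ p, ∑ q, Γ t y i p q * v p * v q) - H t * v i)
    (t : ℝ) {y : Fin n → ℝ} (hy : y ∈ U) (v : Fin n → ℝ) (a b : Fin n) :
    pd (fun w => F t y w a) v b
      = 2 * (∑ q, Γ t y a b q * v q) - H t * (if a = b then 1 else 0) := by
  have he : (fun w => F t y w a)
      = fun w => (∑ p, ∑ q, Γ t y a p q * w p * w q) - H t * w a :=
    funext fun w => hrep t y hy w a
  rw [he, (hasPd_model (fun p q => Γ t y a p q) (H t) a v b).pd_eq]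
  have h2 : (∑ p, Γ t y a p b * v p) = ∑ q, Γ t y a b q * v q :=
    Finset.sum_congr rfl fun p _ => by rw [hsym t y hy a p b]
  rw [h2]; ring

theorem pdpdF_eq (hsym : ∀ t, ∀ y ∈ U, ∀ i p q, Γ t y i p q = Γ t y i q p)
    (hrep : ∀ t, ∀ y ∈ U, ∀ (v : Fin n → ℝ) i,
      F t y v i = (∑ p, ∑ q, Γ t y i p q * v p * v q) - H t * v i)
    (t : ℝ) {y : Fin n → ℝ} (hy : y ∈ U) (v : Fin n → ℝ) (a b r : Fin n) :
    pd (fun w => pd (fun w' => F t y w' a) w b) v r = 2 * Γ t y a b r := by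
  have he : (fun w => pd (fun w' => F t y w' a) w b)
      = fun w => 2 * (∑ q, Γ t y a b q * w q) - H t * (if a = b then 1 else 0) :=
    funext fun w => pdF_eq hsym hrep t hy w a b
  rw [he]
  exact ((((hasPd_linear (fun q => Γ t y a b q) v r).const_mul 2).sub
    (hasPd_const _ _ _)).congr_d (by ring)).pd_eq

theorem eps_eq_zero (hsym : ∀ t, ∀ y ∈ U, ∀ i p q, Γ t y i p q = Γ t y i q p)
    (hrep : ∀ t, ∀ y ∈ U, ∀ (v : Fin n → ℝ) i,
      F t y v i = (∑ p, ∑ q, Γ t y i p q * v p * v q) - H t * v i)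
    (t : ℝ) {y : Fin n → ℝ} (hy : y ∈ U) (v : Fin n → ℝ) (a : Fin n) :
    eps F H t y v a = 0 := by
  unfold eps
  rw [hrep t y hy v a]
  have h1 : ∀ r, pd (fun w => F t y w a) v r * v r
      = (2 * (∑ q, Γ t y a r q * v q) - H t * (if a = r then 1 else 0)) * v r :=
    fun r => by rw [pdF_eq hsym hrep t hy v a r]
  rw [Finset.sum_congr rfl fun r _ => h1 r]
  have h2 : (∑ r, (2 * (∑ q, Γ t y a r q * v q) - H t * (if a = r then 1 else 0)) * v r)
      = 2 * (∑ r, ∑ q, Γ t y a r q * v q * v r) - H t * v a := by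
    simp only [sub_mul, mul_ite, ite_mul, one_mul, zero_mul, mul_zero, mul_one,
      Finset.sum_sub_distrib, Finset.sum_ite_eq, Finset.mem_univ, if_true]
    rw [Finset.mul_sum]
    congr 1
    refine Finset.sum_congr rfl fun r _ => ?_
    rw [mul_assoc, Finset.sum_mul]
  rw [h2]
  have h3 : (∑ r, ∑ q, Γ t y a r q * v q * v r) = ∑ p, ∑ q, Γ t y a p q * v p * v q :=
    Finset.sum_congr rfl fun p _ => Finset.sum_congr rfl fun q _ => by ring
  rw [h3]; ring

theorem Dtens_eq_zero (hsym : ∀ t, ∀ y ∈ U, ∀ i p q, Γ t y i p q = Γ t y i q p)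
    (hrep : ∀ t, ∀ y ∈ U, ∀ (v : Fin n → ℝ) i,
      F t y v i = (∑ p, ∑ q, Γ t y i p q * v p * v q) - H t * v i)
    (t : ℝ) {y : Fin n → ℝ} (hy : y ∈ U) (v : Fin n → ℝ) (i j k m : Fin n) :
    Dtens F t y v i j k m = 0 := by
  unfold Dtens
  have he : (fun w => pd (fun w' => pd (fun w'' => F t y w'' i) w' j) w k)
      = fun _ => 2 * Γ t y i j k :=
    funext fun w => pdpdF_eq hsym hrep t hy w i j k
  rw [he, (hasPd_const _ _ _).pd_eq]

theorem Pdev_eq {Γt : ℝ → (Fin n → ℝ) → Fin n → Fin n → Fin n → ℝ} (hU : IsOpen U)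
    (hsym : ∀ t, ∀ y ∈ U, ∀ i p q, Γ t y i p q = Γ t y i q p)
    (hrep : ∀ t, ∀ y ∈ U, ∀ (v : Fin n → ℝ) i,
      F t y v i = (∑ p, ∑ q, Γ t y i p q * v p * v q) - H t * v i)
    (hΓx : ∀ t, ∀ y ∈ U, ∀ (i p q j : Fin n),
      DifferentiableAt ℝ (fun s => Γ t (Function.update y j s) i p q) (y j))
    (hΓt : ∀ t, ∀ y ∈ U, ∀ (i p q : Fin n), HasDerivAt (fun s => Γ s y i p q) (Γt t y i p q) t)
    (hH : ∀ t, DifferentiableAt ℝ H t)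
    (t : ℝ) {x : Fin n → ℝ} (hx : x ∈ U) (v : Fin n → ℝ) (i j : Fin n) :
    Pdev F H t x v i j = (∑ q, Γt t x i j q * v q)
      + ∑ p, ∑ q,
          (-(pd (fun z => Γ t z i p q) x j) + pd (fun z => Γ t z i j q) x p
            - (∑ r, Γ t x i j r * Γ t x r p q) + ∑ r, Γ t x i r q * Γ t x r j p)
          * v p * v q := by
  have hg : ∀ (t' : ℝ), ∀ y ∈ U, ∀ (a p q j' : Fin n),
      HasPd (fun z => Γ t' z a p q) y j' (pd (fun z => Γ t' z a p q) y j') :=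
    fun t' y hy a p q j' => (hΓx t' y hy a p q j').hasDerivAt
  -- T1
  have hT1 : pd (fun y => F t y v i) x j
      = ∑ p, ∑ q, pd (fun z => Γ t z i p q) x j * v p * v q := by
    have hmod : HasPd (fun y => (∑ p, ∑ q, Γ t y i p q * v p * v q) - H t * v i) x j
        ((∑ p, ∑ q, pd (fun z => Γ t z i p q) x j * v p * v q) - 0) := by
      refine HasPd.sub ?_ (hasPd_const _ _ _)
      refine hasPd_sum _ fun p _ => (hasPd_sum _ fun q _ => ?_)
      exact (((hg t x hx i p q j).mul (hasPd_const (v p) x j)).mul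
        (hasPd_const (v q) x j)).congr_d (by ring)
    have hcong := hmod.congr_nhds (g := fun y => F t y v i)
      ((eventually_update_mem hU hx j).mono fun s hs => hrep t _ hs v i)
    rw [hcong.pd_eq]; ring
  -- T2
  have hT2 : deriv (fun s => pd (fun w => F s x w i) v j) t
      = 2 * (∑ q, Γt t x i j q * v q) - deriv H t * (if i = j then 1 else 0) := by
    have he : (fun s => pd (fun w => F s x w i) v j)
        = fun s => 2 * (∑ q, Γ s x i j q * v q) - H s * (if i = j then 1 else 0) :=
      funext fun s => pdF_eq hsym hrep s hx v i j
    rw [he]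
    have hd : HasDerivAt
        (fun s => 2 * (∑ q, Γ s x i j q * v q) - H s * (if i = j then 1 else 0))
        (2 * (∑ q, Γt t x i j q * v q) - deriv H t * (if i = j then 1 else 0)) t := by
      refine HasDerivAt.sub ?_ (((hH t).hasDerivAt).mul_const _)
      exact (HasDerivAt.fun_sum (fun q _ => (hΓt t x hx i j q).mul_const (v q))).const_mul 2
    exact hd.deriv
  -- T3
  have hT3r : ∀ r : Fin n, pd (fun y => pd (fun w => F t y w i) v j) x r
      = 2 * ∑ q, pd (fun z => Γ t z i j q) x r * v q := by
    intro r
    have hmod : HasPd (fun y => 2 * (∑ q, Γ t y i j q * v q) - H t * (if i = j then 1 else 0))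
        x r ((2 * ∑ q, pd (fun z => Γ t z i j q) x r * v q) - 0) := by
      refine HasPd.sub ?_ (hasPd_const _ _ _)
      refine HasPd.const_mul 2 (hasPd_sum _ fun q _ => ?_)
      exact ((hg t x hx i j q r).mul (hasPd_const (v q) x r)).congr_d (by ring)
    have hcong := hmod.congr_nhds (g := fun y => pd (fun w => F t y w i) v j)
      ((eventually_update_mem hU hx r).mono fun s hs => pdF_eq hsym hrep t hs v i j)
    rw [hcong.pd_eq]; ring
  -- rewrite sums 3,4,5
  have e3 : (∑ r, pd (fun y => pd (fun w => F t y w i) v j) x r * v r)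
      = ∑ r, (2 * ∑ q, pd (fun z => Γ t z i j q) x r * v q) * v r :=
    Finset.sum_congr rfl fun r _ => by rw [hT3r r]
  have e4 : (∑ r, pd (fun w => pd (fun w' => F t x w' i) w j) v r * F t x v r)
      = ∑ r, (2 * Γ t x i j r) * ((∑ p, ∑ q, Γ t x r p q * v p * v q) - H t * v r) :=
    Finset.sum_congr rfl fun r _ => by
      rw [pdpdF_eq hsym hrep t hx v i j r, hrep t x hx v r]
  have e5 : (∑ r, pd (fun w => F t x w i) v r * pd (fun w => F t x w r) v j)
      = ∑ r, (2 * (∑ q, Γ t x i r q * v q) - H t * (if i = r then 1 else 0))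
          * (2 * (∑ q, Γ t x r j q * v q) - H t * (if r = j then 1 else 0)) :=
    Finset.sum_congr rfl fun r _ => by
      rw [pdF_eq hsym hrep t hx v i r, pdF_eq hsym hrep t hx v r j]
  -- canonical forms
  have hA2 : (∑ r, (2 * ∑ q, pd (fun z => Γ t z i j q) x r * v q) * v r)
      = 2 * ∑ p, ∑ q, pd (fun z => Γ t z i j q) x p * v p * v q := by
    rw [Finset.mul_sum]
    refine Finset.sum_congr rfl fun p _ => ?_
    rw [mul_assoc, Finset.sum_mul]
    congr 1
    exact Finset.sum_congr rfl fun q _ => by ring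
  have hA3 : (∑ r, (2 * Γ t x i j r) * ((∑ p, ∑ q, Γ t x r p q * v p * v q) - H t * v r))
      = 2 * (∑ p, ∑ q, (∑ r, Γ t x i j r * Γ t x r p q) * v p * v q)
        - 2 * (H t * ∑ q, Γ t x i j q * v q) := by
    have h1 : ∀ r : Fin n, (2 * Γ t x i j r)
          * ((∑ p, ∑ q, Γ t x r p q * v p * v q) - H t * v r)
        = 2 * (Γ t x i j r * (∑ p, ∑ q, Γ t x r p q * v p * v q))
          - 2 * (H t * (Γ t x i j r * v r)) := fun r => by ring
    rw [Finset.sum_congr rfl fun r _ => h1 r, Finset.sum_sub_distrib]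
    congr 1
    · rw [← Finset.mul_sum]
      congr 1
      have s1 : ∀ r : Fin n, Γ t x i j r * (∑ p, ∑ q, Γ t x r p q * v p * v q)
          = ∑ p, ∑ q, (Γ t x i j r * Γ t x r p q) * v p * v q := fun r => by
        rw [Finset.mul_sum]
        refine Finset.sum_congr rfl fun p _ => ?_
        rw [Finset.mul_sum]
        exact Finset.sum_congr rfl fun q _ => by ring
      rw [Finset.sum_congr rfl fun r _ => s1 r, Finset.sum_comm]
      refine Finset.sum_congr rfl fun p _ => ?_
      rw [Finset.sum_comm]
      refine Finset.sum_congr rfl fun q _ => ?_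
      rw [Finset.sum_mul, Finset.sum_mul]
    · simp [Finset.mul_sum]
  have hA4 : (∑ r, (2 * (∑ q, Γ t x i r q * v q) - H t * (if i = r then 1 else 0))
          * (2 * (∑ q, Γ t x r j q * v q) - H t * (if r = j then 1 else 0)))
      = 4 * (∑ p, ∑ q, (∑ r, Γ t x i r q * Γ t x r j p) * v p * v q)
        - 4 * (H t * ∑ q, Γ t x i j q * v q)
        + (H t)^2 * (if i = j then 1 else 0) := by
    have h1 : ∀ r : Fin n, (2 * (∑ q, Γ t x i r q * v q) - H t * (if i = r then 1 else 0))
          * (2 * (∑ q, Γ t x r j q * v q) - H t * (if r = j then 1 else 0))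
        = 4 * ((∑ q, Γ t x i r q * v q) * (∑ q, Γ t x r j q * v q))
          - 2 * (H t * ((if r = j then 1 else 0) * (∑ q, Γ t x i r q * v q)))
          - 2 * (H t * ((if i = r then 1 else 0) * (∑ q, Γ t x r j q * v q)))
          + (H t)^2 * ((if i = r then 1 else 0) * (if r = j then 1 else 0)) :=
      fun r => by ring
    rw [Finset.sum_congr rfl fun r _ => h1 r]
    simp only [Finset.sum_add_distrib, Finset.sum_sub_distrib]
    have c2 : (∑ r, 2 * (H t * ((if r = j then 1 else 0) * (∑ q, Γ t x i r q * v q))))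
        = 2 * (H t * ∑ q, Γ t x i j q * v q) := by
      simp [Finset.sum_ite_eq', mul_ite]
    have c3 : (∑ r, 2 * (H t * ((if i = r then 1 else 0) * (∑ q, Γ t x r j q * v q))))
        = 2 * (H t * ∑ q, Γ t x i j q * v q) := by
      simp [Finset.sum_ite_eq, mul_ite]
    have c4 : (∑ r : Fin n, (H t)^2 * ((if i = r then 1 else 0) * (if r = j then 1 else 0)))
        = (H t)^2 * (if i = j then 1 else 0) := by
      simp [mul_ite, Finset.sum_ite_eq]
    have c1 : (∑ r, 4 * ((∑ q, Γ t x i r q * v q) * (∑ q, Γ t x r j q * v q)))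
        = 4 * ∑ p, ∑ q, (∑ r, Γ t x i r q * Γ t x r j p) * v p * v q := by
      rw [← Finset.mul_sum]
      congr 1
      have s1 : ∀ r : Fin n, (∑ q, Γ t x i r q * v q) * (∑ q, Γ t x r j q * v q)
          = ∑ q, ∑ p, (Γ t x i r q * Γ t x r j p) * v p * v q := by
        intro r
        rw [Finset.sum_mul_sum]
        refine Finset.sum_congr rfl fun q _ => Finset.sum_congr rfl fun p _ => by ring
      rw [Finset.sum_congr rfl fun r _ => s1 r, Finset.sum_comm]
      -- now ∑ q ∑ r ∑ p; want ∑ p ∑ q ∑ r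
      have s2 : ∀ q : Fin n, (∑ r, ∑ p, (Γ t x i r q * Γ t x r j p) * v p * v q)
          = ∑ p, (∑ r, Γ t x i r q * Γ t x r j p) * v p * v q := by
        intro q
        rw [Finset.sum_comm]
        refine Finset.sum_congr rfl fun p _ => ?_
        rw [Finset.sum_mul, Finset.sum_mul]
      rw [Finset.sum_congr rfl fun q _ => s2 q, Finset.sum_comm]
    rw [c1, c2, c3, c4]
    ring
  -- RHS expansion
  have eR : (∑ p, ∑ q,
        (-(pd (fun z => Γ t z i p q) x j) + pd (fun z => Γ t z i j q) x p
          - (∑ r, Γ t x i j r * Γ t x r p q) + ∑ r, Γ t x i r q * Γ t x r j p)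
        * v p * v q)
      = -(∑ p, ∑ q, pd (fun z => Γ t z i p q) x j * v p * v q)
        + (∑ p, ∑ q, pd (fun z => Γ t z i j q) x p * v p * v q)
        - (∑ p, ∑ q, (∑ r, Γ t x i j r * Γ t x r p q) * v p * v q)
        + ∑ p, ∑ q, (∑ r, Γ t x i r q * Γ t x r j p) * v p * v q := by
    have h1 : ∀ p q : Fin n,
        (-(pd (fun z => Γ t z i p q) x j) + pd (fun z => Γ t z i j q) x p
          - (∑ r, Γ t x i j r * Γ t x r p q) + ∑ r, Γ t x i r q * Γ t x r j p)
        * v p * v q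
        = -(pd (fun z => Γ t z i p q) x j * v p * v q)
          + pd (fun z => Γ t z i j q) x p * v p * v q
          - (∑ r, Γ t x i j r * Γ t x r p q) * v p * v q
          + (∑ r, Γ t x i r q * Γ t x r j p) * v p * v q := fun p q => by ring
    rw [Finset.sum_congr rfl fun p _ => Finset.sum_congr rfl fun q _ => h1 p q]
    simp only [Finset.sum_add_distrib, Finset.sum_sub_distrib, Finset.sum_neg_distrib]
  -- assemble
  unfold Pdev
  rw [hT1, hT2, e3, e4, e5, hA2, hA3, hA4, eR]
  ring

end Model

theorem sum_sym_half (A : Fin n → Fin n → ℝ) (w : Fin n → ℝ) :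
    (∑ p, ∑ q, ((1/4) * (A p q + A q p)) * w p * w q)
      = (1/2) * ∑ p, ∑ q, A p q * w p * w q := by
  have hswap : (∑ p, ∑ q, A q p * w p * w q) = ∑ p, ∑ q, A p q * w p * w q := by
    rw [Finset.sum_comm]
    exact Finset.sum_congr rfl fun p _ => Finset.sum_congr rfl fun q _ => by ring
  have h1 : ∀ p q : Fin n, ((1/4) * (A p q + A q p)) * w p * w q
      = (1/4) * (A p q * w p * w q) + (1/4) * (A q p * w p * w q) := fun p q => by ring
  rw [Finset.sum_congr rfl fun p (_ : p ∈ Finset.univ) =>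
    Finset.sum_congr rfl fun q _ => h1 p q]
  simp only [Finset.sum_add_distrib, ← Finset.mul_sum]
  rw [hswap]; ring

theorem lin_coeff {c : Fin n → ℝ} (h : ∀ v : Fin n → ℝ, (∑ q, c q * v q) = 0) (a : Fin n) :
    c a = 0 := by
  have := h (Pi.single a 1)
  simpa [Pi.single_apply, mul_ite, Finset.sum_ite_eq'] using this

theorem quad_coeff {M : Fin n → Fin n → ℝ}
    (h : ∀ v : Fin n → ℝ, (∑ p, ∑ q, M p q * v p * v q) = 0) (a b : Fin n) :
    M a b + M b a = 0 := by
  have hsingle : ∀ e : Fin n, M e e = 0 := by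
    intro e
    have := h (Pi.single e 1)
    simpa [Pi.single_apply, mul_ite, ite_mul, Finset.sum_ite_eq'] using this
  rcases eq_or_ne a b with rfl | hab
  · rw [hsingle a]; ring
  · have := h (fun p => (if p = a then (1:ℝ) else 0) + (if p = b then 1 else 0))
    simp only [add_mul, mul_add, ite_mul, mul_ite, one_mul, mul_one, zero_mul, mul_zero,
      Finset.sum_add_distrib, Finset.sum_ite_eq', Finset.mem_univ, if_true] at this
    linarith [hsingle a, hsingle b]

theorem lin_quad_zero {c : Fin n → ℝ} {M : Fin n → Fin n → ℝ}
    (h : ∀ v : Fin n → ℝ, (∑ q, c q * v q) + (∑ p, ∑ q, M p q * v p * v q) = 0) :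
    (∀ a, c a = 0) ∧ (∀ a b, M a b + M b a = 0) := by
  have hL : ∀ v : Fin n → ℝ, (∑ q, c q * v q) = 0 := by
    intro v
    have h1 := h v
    have h2 := h (fun p => -(v p))
    have e1 : (∑ q, c q * -(v q)) = -∑ q, c q * v q := by
      simp [mul_neg]
    have e2 : (∑ p, ∑ q, M p q * -(v p) * -(v q)) = ∑ p, ∑ q, M p q * v p * v q := by
      refine Finset.sum_congr rfl fun p _ => Finset.sum_congr rfl fun q _ => by ring
    rw [e1, e2] at h2
    linarith
  have hQ : ∀ v : Fin n → ℝ, (∑ p, ∑ q, M p q * v p * v q) = 0 := by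
    intro v
    have := h v
    rw [hL v] at this
    linarith
  exact ⟨lin_coeff hL, quad_coeff hQ⟩

theorem sum_antisym_quad {M : Fin n → Fin n → ℝ} (h : ∀ p q, M p q + M q p = 0)
    (v : Fin n → ℝ) : (∑ p, ∑ q, M p q * v p * v q) = 0 := by
  have hdouble : (∑ p, ∑ q, M p q * v p * v q) + (∑ p, ∑ q, M p q * v p * v q)
      = ∑ p, ∑ q, (M p q + M q p) * v p * v q := by
    have hswap : (∑ p, ∑ q, M q p * v p * v q) = ∑ p, ∑ q, M p q * v p * v q := by
      rw [Finset.sum_comm]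
      exact Finset.sum_congr rfl fun p _ => Finset.sum_congr rfl fun q _ => by ring
    rw [show (∑ p, ∑ q, (M p q + M q p) * v p * v q)
        = (∑ p, ∑ q, M p q * v p * v q) + ∑ p, ∑ q, M q p * v p * v q by
      simp only [add_mul, Finset.sum_add_distrib]]
    rw [hswap]
  have h0 : (∑ p, ∑ q, (M p q + M q p) * v p * v q) = 0 := by
    simp [h]
  linarith [hdouble, h0]

theorem curv_antisym23 (Γ : (Fin n → ℝ) → Fin n → Fin n → Fin n → ℝ) (x : Fin n → ℝ)
    (i p q j : Fin n) : curv Γ x i p q j = -curv Γ x i p j q := by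
  unfold curv; ring

theorem curv_bianchi {Γ : (Fin n → ℝ) → Fin n → Fin n → Fin n → ℝ}
    (hsym : ∀ y i p q, Γ y i p q = Γ y i q p) (x : Fin n → ℝ) (i p q j : Fin n) :
    curv Γ x i p q j + curv Γ x i q j p + curv Γ x i j p q = 0 := by
  unfold curv
  have hg : ∀ a b c : Fin n, pd (fun y => Γ y i a b) x c = pd (fun y => Γ y i b a) x c :=
    fun a b c => by rw [show (fun y => Γ y i a b) = fun y => Γ y i b a from
      funext fun y => hsym y i a b]
  have hs : ∀ a b c d : Fin n, (∑ r, Γ x r a b * Γ x i r c) = ∑ r, Γ x r b a * Γ x i r c :=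
    fun a b c d => Finset.sum_congr rfl fun r _ => by rw [hsym x r a b]
  rw [hg p q j, hg p j q, hg q j p, hs p q j j, hs p j q q, hs q j p p, hs q p j j,
    hs j p q q, hs j q p p]
  ring

/-- relation between the `K` coefficients of `Pdev` and the curvature. -/
theorem Ksym_of_curv {Γ : (Fin n → ℝ) → Fin n → Fin n → Fin n → ℝ}
    (hsym : ∀ y i p q, Γ y i p q = Γ y i q p) (x : Fin n → ℝ) (i j p q : Fin n) :
    ((-(pd (fun z => Γ z i p q) x j) + pd (fun z => Γ z i j q) x p
        - (∑ r, Γ x i j r * Γ x r p q) + ∑ r, Γ x i r q * Γ x r j p)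
      + (-(pd (fun z => Γ z i q p) x j) + pd (fun z => Γ z i j p) x q
        - (∑ r, Γ x i j r * Γ x r q p) + ∑ r, Γ x i r p * Γ x r j q))
      = -(curv Γ x i p q j + curv Γ x i q p j) := by
  unfold curv
  have hg : ∀ a b c : Fin n, pd (fun y => Γ y i a b) x c = pd (fun y => Γ y i b a) x c :=
    fun a b c => by rw [show (fun y => Γ y i a b) = fun y => Γ y i b a from
      funext fun y => hsym y i a b]
  have e1 : (∑ r, Γ x r p q * Γ x i r j) = ∑ r, Γ x i j r * Γ x r p q :=
    Finset.sum_congr rfl fun r _ => by rw [hsym x i r j]; ring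
  have e2 : (∑ r, Γ x r q p * Γ x i r j) = ∑ r, Γ x i j r * Γ x r q p :=
    Finset.sum_congr rfl fun r _ => by rw [hsym x i r j]; ring
  have e3 : (∑ r, Γ x r p j * Γ x i r q) = ∑ r, Γ x i r q * Γ x r j p :=
    Finset.sum_congr rfl fun r _ => by rw [hsym x r p j]; ring
  have e4 : (∑ r, Γ x r q j * Γ x i r p) = ∑ r, Γ x i r p * Γ x r j q :=
    Finset.sum_congr rfl fun r _ => by rw [hsym x r q j]; ring
  rw [hg p q j, hg q p j, hg q j p, hg j p q]  -- normalize pd terms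
  rw [e1, e2, e3, e4]
  ring

theorem curv_zero_of_sym {T : Fin n → Fin n → Fin n → ℝ}
    (h23 : ∀ p q j, T p q j = -T p j q)
    (h12 : ∀ p q j, T p q j + T q p j = 0)
    (hbi : ∀ p q j, T p q j + T q j p + T j p q = 0) (p q j : Fin n) : T p q j = 0 := by
  have e1 : T q j p = T j p q := by
    have := h12 q j p
    have := h23 j q p
    linarith [h12 q j p, h23 j q p]
  have e2 : T j p q = T p q j := by
    linarith [h12 j p q, h23 p j q]
  have := hbi p q j
  linarith


end KCC

namespace KCC
open ContDiff
section Forward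
variable {n : ℕ} {U : Set (Fin n → ℝ)} {F : ℝ → (Fin n → ℝ) → (Fin n → ℝ) → Fin n → ℝ}
  {H : ℝ → ℝ}

/-- second vertical derivative matrix at `v = 0`. -/
def Afun (F : ℝ → (Fin n → ℝ) → (Fin n → ℝ) → Fin n → ℝ) (t : ℝ) (y : Fin n → ℝ)
    (i a b : Fin n) : ℝ :=
  pd (fun w => pd (fun w' => F t y w' i) w a) 0 b

/-- symmetrized candidate connection coefficients. -/
def Gcf (F : ℝ → (Fin n → ℝ) → (Fin n → ℝ) → Fin n → ℝ) (t : ℝ) (y : Fin n → ℝ)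
    (i a b : Fin n) : ℝ :=
  (1/4) * (Afun F t y i a b + Afun F t y i b a)

theorem Gcf_symm (t : ℝ) (y : Fin n → ℝ) (i a b : Fin n) :
    Gcf F t y i a b = Gcf F t y i b a := by unfold Gcf; ring

variable (hU : IsOpen U)
  (hF' : ContDiffOn ℝ ∞ (fun p : ℝ × (Fin n → ℝ) × (Fin n → ℝ) => F p.1 p.2.1 p.2.2)
    {p : ℝ × (Fin n → ℝ) × (Fin n → ℝ) | p.2.1 ∈ U})

include hF' in
theorem slice_contDiff {y : Fin n → ℝ} (hy : y ∈ U) (t : ℝ) (i : Fin n) :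
    ContDiff ℝ ∞ (fun w => F t y w i) := by
  have hι : ContDiff ℝ ∞ (fun w : Fin n → ℝ =>
      ((t, y, w) : ℝ × (Fin n → ℝ) × (Fin n → ℝ))) :=
    contDiff_const.prodMk (contDiff_const.prodMk contDiff_id)
  have h := (contDiffOn_pi.1 hF' i).comp
    (hι.contDiffOn : ContDiffOn ℝ ∞ _ Set.univ) (fun w _ => hy)
  exact contDiffOn_univ.mp h

include hU hF' in
theorem Afun_contDiffOn (i a b : Fin n) :
    ContDiffOn ℝ ∞ (fun r : ℝ × (Fin n → ℝ) => Afun F r.1 r.2 i a b)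
      {r : ℝ × (Fin n → ℝ) | r.2 ∈ U} := by
  have hΩ : IsOpen {p : ℝ × (Fin n → ℝ) × (Fin n → ℝ) | p.2.1 ∈ U} :=
    hU.preimage (continuous_fst.comp continuous_snd)
  have hGi := contDiffOn_pi.1 hF' i
  have hG1 := contDiffOn_Pv hGi hΩ a
  have hG2 : ContDiffOn ℝ ∞
      (fun p' : ℝ × (Fin n → ℝ) × (Fin n → ℝ) =>
        pd (fun w => pd (fun w' => F p'.1 p'.2.1 w' i) w a) p'.2.2 b)
      {p : ℝ × (Fin n → ℝ) × (Fin n → ℝ) | p.2.1 ∈ U} := contDiffOn_Pv hG1 hΩ b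
  have hι : ContDiff ℝ ∞ (fun r : ℝ × (Fin n → ℝ) =>
      ((r.1, r.2, (0 : Fin n → ℝ)) : ℝ × (Fin n → ℝ) × (Fin n → ℝ))) :=
    contDiff_fst.prodMk (contDiff_snd.prodMk contDiff_const)
  exact hG2.comp
    (hι.contDiffOn : ContDiffOn ℝ ∞ _ {r : ℝ × (Fin n → ℝ) | r.2 ∈ U}) (fun r hr => hr)

include hU hF' in
theorem Gcf_diffAt_x {y : Fin n → ℝ} (hy : y ∈ U) (t : ℝ) (i a b j : Fin n) :
    DifferentiableAt ℝ (fun s => Gcf F t (Function.update y j s) i a b) (y j) := by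
  have hV : IsOpen {r : ℝ × (Fin n → ℝ) | r.2 ∈ U} := hU.preimage continuous_snd
  have hcurve : DifferentiableAt ℝ
      (fun s => ((t, Function.update y j s) : ℝ × (Fin n → ℝ))) (y j) :=
    (differentiableAt_const _).prodMk (hasDerivAt_update y j (y j)).differentiableAt
  have hA : ∀ a' b' : Fin n,
      DifferentiableAt ℝ (fun s => Afun F t (Function.update y j s) i a' b') (y j) := by
    intro a' b'
    have hjd : DifferentiableAt ℝ (fun r : ℝ × (Fin n → ℝ) => Afun F r.1 r.2 i a' b')
        ((t, Function.update y j (y j)) : ℝ × (Fin n → ℝ)) := by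
      rw [Function.update_eq_self]
      exact ((Afun_contDiffOn hU hF' i a' b').differentiableOn
        (by simp)).differentiableAt (hV.mem_nhds hy)
    exact hjd.comp (y j) hcurve
  exact ((hA a b).add (hA b a)).const_mul (1/4)

include hU hF' in
theorem Gcf_diffAt_t {y : Fin n → ℝ} (hy : y ∈ U) (t : ℝ) (i a b : Fin n) :
    DifferentiableAt ℝ (fun s => Gcf F s y i a b) t := by
  have hV : IsOpen {r : ℝ × (Fin n → ℝ) | r.2 ∈ U} := hU.preimage continuous_snd
  have hcurve : DifferentiableAt ℝ (fun s => ((s, y) : ℝ × (Fin n → ℝ))) t :=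
    differentiableAt_id.prodMk (differentiableAt_const _)
  have hA : ∀ a' b' : Fin n, DifferentiableAt ℝ (fun s => Afun F s y i a' b') t := by
    intro a' b'
    have hjd : DifferentiableAt ℝ (fun r : ℝ × (Fin n → ℝ) => Afun F r.1 r.2 i a' b')
        ((t, y) : ℝ × (Fin n → ℝ)) :=
      ((Afun_contDiffOn hU hF' i a' b').differentiableOn
        (by simp)).differentiableAt (hV.mem_nhds hy)
    exact hjd.comp t hcurve
  exact ((hA a b).add (hA b a)).const_mul (1/4)

include hU hF' in
theorem quad_rep
    (heps : ∀ (t : ℝ), ∀ x ∈ U, ∀ (v : Fin n → ℝ) (i : Fin n), eps F H t x v i = 0)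
    (hD : ∀ (t : ℝ), ∀ x ∈ U, ∀ (v : Fin n → ℝ) (i j k m : Fin n), Dtens F t x v i j k m = 0) :
    ∀ (t : ℝ), ∀ y ∈ U, ∀ (v : Fin n → ℝ) (i : Fin n),
      F t y v i = (∑ p, ∑ q, Gcf F t y i p q * v p * v q) - H t * v i := by
  intro t y hy v i
  have hslice : ContDiff ℝ ∞ (fun w => F t y w i) := slice_contDiff hF' hy t i
  have h3 : ∀ (y' : Fin n → ℝ) (j k m : Fin n),
      pd (fun w => pd (fun w' => pd (fun w'' => F t y w'' i) w' j) w k) y' m = 0 :=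
    fun y' j k m => hD t y hy y' i j k m
  have hq1 : ∀ w : Fin n → ℝ, F t y w i
      = F t y 0 i + (∑ r, pd (fun w' => F t y w' i) 0 r * w r)
        + (1/2) * ∑ p, ∑ q, Afun F t y i p q * w p * w q :=
    fun w => taylor2 hslice h3 w
  have hq2 : ∀ w : Fin n → ℝ, F t y w i
      = F t y 0 i + (∑ r, pd (fun w' => F t y w' i) 0 r * w r)
        + ∑ p, ∑ q, Gcf F t y i p q * w p * w q := by
    intro w
    rw [hq1 w, ← sum_sym_half (Afun F t y i) w]
    rfl
  have hepsv : ∀ v' : Fin n → ℝ,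
      F t y 0 i + (1/2) * (∑ r, pd (fun w' => F t y w' i) 0 r * v' r)
        + (1/2) * H t * v' i = 0 := by
    intro v'
    have he := heps t y hy v' i
    unfold eps at he
    rw [hq2 v'] at he
    have hpd : ∀ r, pd (fun w => F t y w i) v' r
        = pd (fun w' => F t y w' i) 0 r
          + ((∑ q, Gcf F t y i r q * v' q) + ∑ p, Gcf F t y i p r * v' p) := by
      intro r
      have hfe : (fun w => F t y w i)
          = fun w => (F t y 0 i + (∑ r', pd (fun w' => F t y w' i) 0 r' * w r'))
              + ∑ p, ∑ q, Gcf F t y i p q * w p * w q :=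
        funext fun w => hq2 w
      rw [hfe]
      have h1 := (((hasPd_const (F t y 0 i) v' r).add
        (hasPd_linear (fun r' => pd (fun w' => F t y w' i) 0 r') v' r)).add
        (hasPd_quad (fun p q => Gcf F t y i p q) v' r))
      rw [h1.pd_eq]
      have h0 := (((hasPd_const (F t y 0 i) (0 : Fin n → ℝ) r).add
        (hasPd_linear (fun r' => pd (fun w' => F t y w' i) 0 r') (0 : Fin n → ℝ) r)).add
        (hasPd_quad (fun p q => Gcf F t y i p q) (0 : Fin n → ℝ) r))
      rw [h0.pd_eq]
      simp
    rw [show (∑ r, pd (fun w => F t y w i) v' r * v' r)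
        = ∑ r, (pd (fun w' => F t y w' i) 0 r
          + ((∑ q, Gcf F t y i r q * v' q) + ∑ p, Gcf F t y i p r * v' p)) * v' r from
      Finset.sum_congr rfl fun r _ => by rw [hpd r]] at he
    have hS1 : (∑ r, (∑ q, Gcf F t y i r q * v' q) * v' r)
        = ∑ p, ∑ q, Gcf F t y i p q * v' p * v' q := by
      refine Finset.sum_congr rfl fun p _ => ?_
      rw [Finset.sum_mul]
      exact Finset.sum_congr rfl fun q _ => by ring
    have hS2 : (∑ r, (∑ p, Gcf F t y i p r * v' p) * v' r)
        = ∑ p, ∑ q, Gcf F t y i p q * v' p * v' q := by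
      rw [show (∑ r, (∑ p, Gcf F t y i p r * v' p) * v' r)
          = ∑ r, ∑ p, Gcf F t y i p r * v' p * v' r from
        Finset.sum_congr rfl fun r _ => by rw [Finset.sum_mul], Finset.sum_comm]
    have hsplit : (∑ r, (pd (fun w' => F t y w' i) 0 r
          + ((∑ q, Gcf F t y i r q * v' q) + ∑ p, Gcf F t y i p r * v' p)) * v' r)
        = (∑ r, pd (fun w' => F t y w' i) 0 r * v' r)
          + ((∑ r, (∑ q, Gcf F t y i r q * v' q) * v' r)
            + ∑ r, (∑ p, Gcf F t y i p r * v' p) * v' r) := by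
      simp only [add_mul, Finset.sum_add_distrib]
    rw [hsplit, hS1, hS2] at he
    linarith
  have hc0 : F t y 0 i = 0 := by
    have := hepsv 0
    simpa using this
  have hb : ∀ r, pd (fun w' => F t y w' i) 0 r = -(H t) * (if i = r then 1 else 0) := by
    intro r
    have hl : ∀ v' : Fin n → ℝ,
        (∑ r', (pd (fun w' => F t y w' i) 0 r'
          + H t * (if i = r' then 1 else 0)) * v' r') = 0 := by
      intro v'
      have hz := hepsv v'
      rw [hc0] at hz
      have hx2 : (∑ r', (pd (fun w' => F t y w' i) 0 r'
            + H t * (if i = r' then 1 else 0)) * v' r')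
          = (∑ r', pd (fun w' => F t y w' i) 0 r' * v' r') + H t * v' i := by
        simp only [add_mul, Finset.sum_add_distrib]
        congr 1
        simp [ite_mul, mul_assoc, ← Finset.mul_sum, Finset.sum_ite_eq]
      rw [hx2]; linarith
    have := lin_coeff
      (c := fun r' => pd (fun w' => F t y w' i) 0 r' + H t * (if i = r' then 1 else 0)) hl r
    linarith
  rw [hq2 v, hc0]
  have hlin0 : (∑ r, pd (fun w' => F t y w' i) 0 r * v r) = -(H t) * v i := by
    rw [Finset.sum_congr rfl fun r _ => by rw [hb r]]
    simp [ite_mul, mul_ite, mul_assoc, ← Finset.mul_sum, Finset.sum_ite_eq]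
  rw [hlin0]; ring

include hU hF' in
theorem forward_main (hH : ContDiff ℝ ∞ H)
    (heps : ∀ (t : ℝ), ∀ x ∈ U, ∀ (v : Fin n → ℝ) (i : Fin n), eps F H t x v i = 0)
    (hPdev : ∀ (t : ℝ), ∀ x ∈ U, ∀ (v : Fin n → ℝ) (i j : Fin n), Pdev F H t x v i j = 0)
    (hD : ∀ (t : ℝ), ∀ x ∈ U, ∀ (v : Fin n → ℝ) (i j k m : Fin n), Dtens F t x v i j k m = 0) :
    ∃ Γ : (Fin n → ℝ) → Fin n → Fin n → Fin n → ℝ,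
      (∀ x i j k, Γ x i j k = Γ x i k j) ∧
      (∀ x ∈ U, ∀ (i p q j : Fin n), curv Γ x i p q j = 0) ∧
      (∀ (t : ℝ), ∀ x ∈ U, ∀ (v : Fin n → ℝ) (i : Fin n),
        F t x v i = (∑ p, ∑ q, Γ x i p q * v p * v q) - H t * v i) := by
  classical
  have hH' : ∀ t, DifferentiableAt ℝ H t :=
    fun t => (hH.differentiable (by simp)).differentiableAt
  have hrepc := quad_rep hU hF' heps hD
  have hsymc : ∀ (t : ℝ), ∀ y ∈ U, ∀ (i p q : Fin n), Gcf F t y i p q = Gcf F t y i q p :=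
    fun t y _ i p q => Gcf_symm t y i p q
  have hΓx : ∀ (t : ℝ), ∀ y ∈ U, ∀ (i p q j : Fin n),
      DifferentiableAt ℝ (fun s => Gcf F t (Function.update y j s) i p q) (y j) :=
    fun t y hy i p q j => Gcf_diffAt_x hU hF' hy t i p q j
  have hΓt : ∀ (t : ℝ), ∀ y ∈ U, ∀ (i p q : Fin n),
      HasDerivAt (fun s => Gcf F s y i p q) (deriv (fun s => Gcf F s y i p q) t) t :=
    fun t y hy i p q => (Gcf_diffAt_t hU hF' hy t i p q).hasDerivAt
  have hext : ∀ (t : ℝ), ∀ x, x ∈ U → ∀ (i j : Fin n),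
      (∀ a : Fin n, deriv (fun s => Gcf F s x i j a) t = 0) ∧
      (∀ a b : Fin n,
        (-(pd (fun z => Gcf F t z i a b) x j) + pd (fun z => Gcf F t z i j b) x a
            - (∑ r, Gcf F t x i j r * Gcf F t x r a b)
            + ∑ r, Gcf F t x i r b * Gcf F t x r j a)
          + (-(pd (fun z => Gcf F t z i b a) x j) + pd (fun z => Gcf F t z i j a) x b
            - (∑ r, Gcf F t x i j r * Gcf F t x r b a)
            + ∑ r, Gcf F t x i r a * Gcf F t x r j b)
          = 0) := by
    intro t x hx i j
    have hz : ∀ v : Fin n → ℝ,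
        (∑ q, deriv (fun s => Gcf F s x i j q) t * v q)
          + (∑ p, ∑ q,
            (-(pd (fun z => Gcf F t z i p q) x j) + pd (fun z => Gcf F t z i j q) x p
              - (∑ r, Gcf F t x i j r * Gcf F t x r p q)
              + ∑ r, Gcf F t x i r q * Gcf F t x r j p) * v p * v q) = 0 := by
      intro v
      have hP := Pdev_eq (Γ := Gcf F)
        (Γt := fun t y i p q => deriv (fun s => Gcf F s y i p q) t)
        hU hsymc hrepc hΓx hΓt hH' t hx v i j
      rw [hPdev t x hx v i j] at hP
      exact hP.symm
    exact lin_quad_zero hz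
  have htind : ∀ (t : ℝ), ∀ y ∈ U, ∀ (i p q : Fin n),
      Gcf F t y i p q = Gcf F 0 y i p q := by
    intro t y hy i p q
    exact is_const_of_deriv_eq_zero (fun s => Gcf_diffAt_t hU hF' hy s i p q)
      (fun s => (hext s y hy i p).1 q) t 0
  refine ⟨fun y i p q => if y ∈ U then Gcf F 0 y i p q else 0, ?_, ?_, ?_⟩
  · intro x i j k
    by_cases hx : x ∈ U
    · simp only [if_pos hx]
      exact Gcf_symm 0 x i j k
    · simp [hx]
  · intro x hx i p q j
    set Γf : (Fin n → ℝ) → Fin n → Fin n → Fin n → ℝ :=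
      fun y i p q => if y ∈ U then Gcf F 0 y i p q else 0 with hΓf
    have hsymf : ∀ y a b c, Γf y a b c = Γf y a c b := by
      intro y a b c
      by_cases hyU : y ∈ U
      · simp only [hΓf, if_pos hyU]
        exact Gcf_symm 0 y a b c
      · simp [hΓf, hyU]
    have hval : ∀ a b c, Γf x a b c = Gcf F 0 x a b c := fun a b c => by simp [hΓf, hx]
    have hpdf : ∀ a b c d, pd (fun y => Γf y a b c) x d = pd (fun z => Gcf F 0 z a b c) x d := by
      intro a b c d
      refine pd_congr_nhds ?_
      refine (eventually_update_mem hU hx d).mono fun s hs => ?_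
      simp [hΓf, hs]
    have h12 : ∀ p' q' j', curv Γf x i p' q' j' + curv Γf x i q' p' j' = 0 := by
      intro p' q' j'
      have hks := Ksym_of_curv (fun y a b c => hsymf y a b c) x i j' p' q'
      simp only [hpdf, hval] at hks
      have hq := (hext 0 x hx i j').2 p' q'
      linarith [hks, hq]
    have h23 : ∀ p' q' j', curv Γf x i p' q' j' = -curv Γf x i p' j' q' :=
      fun p' q' j' => curv_antisym23 Γf x i p' q' j'
    have hbi : ∀ p' q' j',
        curv Γf x i p' q' j' + curv Γf x i q' j' p' + curv Γf x i j' p' q' = 0 :=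
      fun p' q' j' => curv_bianchi (fun y a b c => hsymf y a b c) x i p' q' j'
    exact curv_zero_of_sym h23 h12 hbi p q j
  · intro t x hx v i
    rw [hrepc t x hx v i]
    congr 1
    refine Finset.sum_congr rfl fun p _ => Finset.sum_congr rfl fun q _ => ?_
    rw [show (fun y i p q => if y ∈ U then Gcf F 0 y i p q else 0) x i p q
        = Gcf F 0 x i p q by simp [hx], htind t x hx i p q]

end Forward
end KCC


open ContDiff

/-- Characterization of the jet h-KCC-invariants: all five invariants of the SODE
`d²x^i/dt² + F^{(i)}_{(1)1} = 0` vanish iff there is a flat symmetric linear connection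
`Γ^i_{jk}(x)` with `F^{(i)} = Γ^i_{pq}(x) x₁^p x₁^q − H¹₁₁(t) x₁^i`. -/
theorem characterization_of_KCC_invariants {n : ℕ}
    (U : Set (Fin n → ℝ)) (hU : IsOpen U)
    (F : ℝ → (Fin n → ℝ) → (Fin n → ℝ) → Fin n → ℝ) (H : ℝ → ℝ)
    (hF : ContDiffOn ℝ (⊤ : ℕ∞) (fun p : ℝ × (Fin n → ℝ) × (Fin n → ℝ) => F p.1 p.2.1 p.2.2)
      {p : ℝ × (Fin n → ℝ) × (Fin n → ℝ) | p.2.1 ∈ U})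
    (hH : ContDiff ℝ (⊤ : ℕ∞) H) :
    ((∀ (t : ℝ), ∀ x ∈ U, ∀ (v : Fin n → ℝ) (i : Fin n), eps F H t x v i = 0) ∧
     (∀ (t : ℝ), ∀ x ∈ U, ∀ (v : Fin n → ℝ) (i j : Fin n), Pdev F H t x v i j = 0) ∧
     (∀ (t : ℝ), ∀ x ∈ U, ∀ (v : Fin n → ℝ) (i j k : Fin n), Rcurv F H t x v i j k = 0) ∧
     (∀ (t : ℝ), ∀ x ∈ U, ∀ (v : Fin n → ℝ) (i j k m : Fin n), Bcurv F H t x v i j k m = 0) ∧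
     (∀ (t : ℝ), ∀ x ∈ U, ∀ (v : Fin n → ℝ) (i j k m : Fin n), Dtens F t x v i j k m = 0))
    ↔
    ∃ Γ : (Fin n → ℝ) → Fin n → Fin n → Fin n → ℝ,
      (∀ x i j k, Γ x i j k = Γ x i k j) ∧
      (∀ x ∈ U, ∀ (i p q j : Fin n), curv Γ x i p q j = 0) ∧
      (∀ (t : ℝ), ∀ x ∈ U, ∀ (v : Fin n → ℝ) (i : Fin n),
        F t x v i = (∑ p, ∑ q, Γ x i p q * v p * v q) - H t * v i) := by
  classical
  have hF' : ContDiffOn ℝ ∞ (fun p : ℝ × (Fin n → ℝ) × (Fin n → ℝ) => F p.1 p.2.1 p.2.2)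
      {p : ℝ × (Fin n → ℝ) × (Fin n → ℝ) | p.2.1 ∈ U} := hF.of_le (by simp)
  have hΩ : IsOpen {p : ℝ × (Fin n → ℝ) × (Fin n → ℝ) | p.2.1 ∈ U} :=
    hU.preimage (continuous_fst.comp continuous_snd)
  have hH' : ∀ t, DifferentiableAt ℝ H t :=
    fun t => (hH.differentiable (by simp)).differentiableAt
  constructor
  · rintro ⟨heps, hPdev, -, -, hD⟩
    exact KCC.forward_main hU hF' hH heps hPdev hD
  · rintro ⟨Γ, hsymΓ, hcurv, hrepΓ⟩
    have hsym' : ∀ (t : ℝ), ∀ y ∈ U, ∀ (i p q : Fin n), Γ y i p q = Γ y i q p :=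
      fun _ y _ i p q => hsymΓ y i p q
    have hrep' : ∀ (t : ℝ), ∀ y ∈ U, ∀ (v : Fin n → ℝ) (i : Fin n),
        F t y v i = (∑ p, ∑ q, Γ y i p q * v p * v q) - H t * v i :=
      fun t y hy v i => hrepΓ t y hy v i
    have hΓx' : ∀ (t : ℝ), ∀ y ∈ U, ∀ (i p q j : Fin n),
        DifferentiableAt ℝ (fun s => Γ (Function.update y j s) i p q) (y j) := by
      intro t y hy i p q j
      have hGi : ContDiffOn ℝ ∞
          (fun p' : ℝ × (Fin n → ℝ) × (Fin n → ℝ) => F p'.1 p'.2.1 p'.2.2 i)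
          {p : ℝ × (Fin n → ℝ) × (Fin n → ℝ) | p.2.1 ∈ U} := contDiffOn_pi.1 hF' i
      have hG1 : ContDiffOn ℝ ∞
          (fun p' : ℝ × (Fin n → ℝ) × (Fin n → ℝ) => pd (fun w => F p'.1 p'.2.1 w i) p'.2.2 p)
          {p : ℝ × (Fin n → ℝ) × (Fin n → ℝ) | p.2.1 ∈ U} := KCC.contDiffOn_Pv hGi hΩ p
      have hG2 : ContDiffOn ℝ ∞
          (fun p' : ℝ × (Fin n → ℝ) × (Fin n → ℝ) =>
            pd (fun w => pd (fun w' => F p'.1 p'.2.1 w' i) w p) p'.2.2 q)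
          {p : ℝ × (Fin n → ℝ) × (Fin n → ℝ) | p.2.1 ∈ U} := KCC.contDiffOn_Pv hG1 hΩ q
      have hcurve : DifferentiableAt ℝ
          (fun s => (((0:ℝ), Function.update y j s, (0 : Fin n → ℝ)) :
            ℝ × (Fin n → ℝ) × (Fin n → ℝ))) (y j) :=
        (differentiableAt_const _).prodMk
          (((KCC.hasDerivAt_update y j (y j)).differentiableAt).prodMk (differentiableAt_const _))
      have hjd : DifferentiableAt ℝ
          (fun p' : ℝ × (Fin n → ℝ) × (Fin n → ℝ) =>
            pd (fun w => pd (fun w' => F p'.1 p'.2.1 w' i) w p) p'.2.2 q)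
          ((0:ℝ), Function.update y j (y j), (0 : Fin n → ℝ)) := by
        rw [Function.update_eq_self]
        exact KCC.differentiableAt_of_contDiffOn hG2 hΩ hy
      have hcomp : DifferentiableAt ℝ
          (fun s => pd (fun w => pd (fun w' => F 0 (Function.update y j s) w' i) w p) 0 q)
          (y j) := by exact hjd.comp (y j) hcurve
      have heq : ∀ᶠ s in nhds (y j), Γ (Function.update y j s) i p q
          = (1/2) * pd (fun w => pd (fun w' => F 0 (Function.update y j s) w' i) w p) 0 q := by
        refine (KCC.eventually_update_mem hU hy j).mono fun s hs => ?_
        rw [KCC.pdpdF_eq (Γ := fun _ y => Γ y) hsym' hrep' 0 hs 0 i p q]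
        ring
      exact (hcomp.const_mul (1/2)).congr_of_eventuallyEq heq
    have hPdev0 : ∀ (t : ℝ), ∀ x ∈ U, ∀ (v : Fin n → ℝ) (i j : Fin n),
        Pdev F H t x v i j = 0 := by
      intro t x hx v i j
      have hP := KCC.Pdev_eq (Γ := fun _ y => Γ y) (Γt := fun _ _ _ _ _ => 0) hU hsym' hrep'
        hΓx' (fun t y hy i p q => hasDerivAt_const t _) hH' t hx v i j
      rw [hP, show (∑ q : Fin n, (0:ℝ) * v q) = 0 by simp, zero_add]
      refine KCC.sum_antisym_quad (fun p q => ?_) v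
      have hks := KCC.Ksym_of_curv (Γ := Γ) hsymΓ x i j p q
      rw [hcurv x hx i p q j, hcurv x hx i q p j] at hks
      simpa using hks
    have hRcurv0 : ∀ (t : ℝ), ∀ x ∈ U, ∀ (v : Fin n → ℝ) (i j k : Fin n),
        Rcurv F H t x v i j k = 0 := by
      intro t x hx v i j k
      unfold Rcurv
      rw [show (fun w => Pdev F H t x w i j) = fun _ => (0:ℝ) from
          funext fun w => hPdev0 t x hx w i j,
        show (fun w => Pdev F H t x w i k) = fun _ => (0:ℝ) from
          funext fun w => hPdev0 t x hx w i k, KCC.pd_zero_fun, KCC.pd_zero_fun]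
      ring
    refine ⟨fun t x hx v i => KCC.eps_eq_zero (Γ := fun _ y => Γ y) hsym' hrep' t hx v i,
      hPdev0, hRcurv0, ?_,
      fun t x hx v i j k m => KCC.Dtens_eq_zero (Γ := fun _ y => Γ y) hsym' hrep' t hx v i j k m⟩
    intro t x hx v i j k m
    unfold Bcurv
    rw [show (fun w => Rcurv F H t x w i j k) = fun _ => (0:ℝ) from
        funext fun w => hRcurv0 t x hx w i j k, KCC.pd_zero_fun]
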